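/- The function R₊(w₁) = D₂(w₁)/D₊(w₁), where D₂(w₁) = w₁ ln(2w₁) + (1-w₁) ln(2(1-w₁)) and D₊(w₁) = 6(1/2-w₁)², extended by R₊(1/2) = 1/3, is strictly decreasing on (0, 1/2]. -/

import Mathlib

/-!
Write `s = 1/2 - w` and `logit w = log w - log (1 - w)`, so that `D₂' = logit` and
`logit' = 1/(w(1-w))`. On `(0, 1/2)` the derivative of `D₂/D₊` is `(s logit w + 2 D₂ w)/(6 s³)`;
its numerator vanishes at `1/2` together with its derivative `logit w + s/(w(1-w))`, which is
decreasing, so the numerator is negative. At the endpoint, `R₊ > 1/3` is the strict Pinsker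
inequality `D₂ w > 2 s²`, true because both sides agree to first order at `1/2` and
`D₂'' = 1/(w(1-w)) > 4`. Each of these signs comes from the same principle: a function vanishing
at `1/2` with negative derivative on `(0, 1/2)` is positive there.
-/

noncomputable def D₂ (w₁ : ℝ) : ℝ :=
  w₁ * Real.log (2 * w₁) + (1 - w₁) * Real.log (2 * (1 - w₁))

noncomputable def Dplus (w₁ : ℝ) : ℝ := 6 * (1 / 2 - w₁) ^ 2

noncomputable def Rplus (w₁ : ℝ) : ℝ :=
  if w₁ = 1 / 2 then 1 / 3 else D₂ w₁ / Dplus w₁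

open Real Set

lemma strictAntiOn_of_hasDerivAt_neg {D : Set ℝ} (hD : Convex ℝ D) {f f' : ℝ → ℝ}
    (hf : ∀ x ∈ D, HasDerivAt f (f' x) x) (hf' : ∀ x ∈ interior D, f' x < 0) :
    StrictAntiOn f D :=
  strictAntiOn_of_hasDerivWithinAt_neg hD (fun x hx ↦ (hf x hx).continuousAt.continuousWithinAt)
    (fun x hx ↦ (hf x (interior_subset hx)).hasDerivWithinAt) hf'

lemma pos_of_hasDerivAt_neg_of_eq_zero {f f' : ℝ → ℝ} {a b x : ℝ}
    (hf : ∀ y ∈ Ioc a b, HasDerivAt f (f' y) y) (hf' : ∀ y ∈ Ioo a b, f' y < 0)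
    (hb : f b = 0) (hx : x ∈ Ioo a b) : 0 < f x := by
  have hanti := strictAntiOn_of_hasDerivAt_neg (convex_Ioc a b) hf (by rwa [interior_Ioc])
  simpa [hb] using hanti ⟨hx.1, hx.2.le⟩ ⟨hx.1.trans hx.2, le_rfl⟩ hx.2

noncomputable def logit (w : ℝ) : ℝ := log w - log (1 - w)

section UnitInterval

variable {w : ℝ}

lemma hasDerivAt_logit (hw₀ : 0 < w) (hw₁ : w < 1) :
    HasDerivAt logit (1 / (w * (1 - w))) w := by
  have h1w : 1 - w ≠ 0 := (sub_pos.2 hw₁).ne'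
  refine (((hasDerivAt_id' w).log hw₀.ne').sub
    (((hasDerivAt_id' w).const_sub 1).log h1w)).congr_deriv ?_
  field_simp
  ring

lemma hasDerivAt_D₂ (hw₀ : 0 < w) (hw₁ : w < 1) : HasDerivAt D₂ (logit w) w := by
  have h1w : 1 - w ≠ 0 := (sub_pos.2 hw₁).ne'
  have h := ((hasDerivAt_id' w).mul (((hasDerivAt_id' w).const_mul 2).log
    (mul_ne_zero two_ne_zero hw₀.ne'))).add (((hasDerivAt_id' w).const_sub 1).mul
    ((((hasDerivAt_id' w).const_sub 1).const_mul 2).log (mul_ne_zero two_ne_zero h1w)))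
  refine h.congr_deriv ?_
  rw [logit, log_mul two_ne_zero hw₀.ne', log_mul two_ne_zero h1w]
  field_simp
  ring

lemma logit_lt_four_mul_sub_two (hw : w ∈ Ioo (0 : ℝ) (1 / 2)) : logit w < 4 * w - 2 := by
  have key := pos_of_hasDerivAt_neg_of_eq_zero (f := fun y ↦ 4 * y - 2 - logit y)
    (f' := fun y ↦ 4 - 1 / (y * (1 - y)))
    (fun y hy ↦ ((((hasDerivAt_id' y).const_mul 4).sub_const 2).sub
      (hasDerivAt_logit hy.1 (by linarith [hy.2]))).congr_deriv (by ring))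
    (fun y hy ↦ by
      have : 0 < y * (1 - y) := mul_pos hy.1 (by linarith [hy.2])
      rw [sub_neg, lt_div_iff₀ this]
      nlinarith [hy.2])
    (by norm_num [logit]) hw
  linarith

lemma two_mul_sq_lt_D₂ (hw : w ∈ Ioo (0 : ℝ) (1 / 2)) : 2 * (1 / 2 - w) ^ 2 < D₂ w := by
  have key := pos_of_hasDerivAt_neg_of_eq_zero (f := fun y ↦ D₂ y - 2 * (1 / 2 - y) ^ 2)
    (f' := fun y ↦ logit y - (4 * y - 2))
    (fun y hy ↦ ((hasDerivAt_D₂ hy.1 (by linarith [hy.2])).sub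
      ((((hasDerivAt_id' y).const_sub (1 / 2)).pow 2).const_mul 2)).congr_deriv (by ring))
    (fun y hy ↦ sub_neg.2 (logit_lt_four_mul_sub_two hy))
    (by norm_num [D₂]) hw
  linarith

lemma neg_logit_lt_div (hw : w ∈ Ioo (0 : ℝ) (1 / 2)) :
    -logit w < (1 / 2 - w) / (w * (1 - w)) := by
  have key := pos_of_hasDerivAt_neg_of_eq_zero
    (f := fun y ↦ logit y + (1 / 2 - y) / (y * (1 - y)))
    (f' := fun y ↦ -2 * (1 / 2 - y) ^ 2 / (y * (1 - y)) ^ 2)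
    (fun y hy ↦ by
      have hy₁ : 1 - y ≠ 0 := by linarith [hy.2]
      refine ((hasDerivAt_logit hy.1 (by linarith [hy.2])).add
        (((hasDerivAt_id' y).const_sub (1 / 2)).div
          ((hasDerivAt_id' y).mul ((hasDerivAt_id' y).const_sub 1))
          (mul_ne_zero hy.1.ne' hy₁))).congr_deriv ?_
      simp only [Pi.mul_apply]
      field_simp
      ring)
    (fun y hy ↦ by
      have : 0 < 1 / 2 - y := by linarith [hy.2]
      have : 0 < y * (1 - y) := mul_pos hy.1 (by linarith [hy.2])
      apply div_neg_of_neg_of_pos <;> nlinarith)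
    (by norm_num [logit]) hw
  linarith

lemma two_mul_D₂_lt (hw : w ∈ Ioo (0 : ℝ) (1 / 2)) : 2 * D₂ w < -((1 / 2 - w) * logit w) := by
  have key := pos_of_hasDerivAt_neg_of_eq_zero
    (f := fun y ↦ -((1 / 2 - y) * logit y) - 2 * D₂ y)
    (f' := fun y ↦ -(logit y + (1 / 2 - y) / (y * (1 - y))))
    (fun y hy ↦ by
      have hy₁ : y < 1 := by linarith [hy.2]
      refine ((((hasDerivAt_id' y).const_sub (1 / 2)).mul (hasDerivAt_logit hy.1 hy₁)).neg.sub
        ((hasDerivAt_D₂ hy.1 hy₁).const_mul 2)).congr_deriv ?_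
      field_simp
      ring)
    (fun y hy ↦ by linarith [neg_logit_lt_div hy])
    (by norm_num [logit, D₂]) hw
  linarith

lemma one_third_lt_D₂_div_Dplus (hw : w ∈ Ioo (0 : ℝ) (1 / 2)) : 1 / 3 < D₂ w / Dplus w := by
  have : 0 < 1 / 2 - w := by linarith [hw.2]
  rw [Dplus, lt_div_iff₀ (by positivity)]
  linarith [two_mul_sq_lt_D₂ hw]

end UnitInterval

lemma strictAntiOn_D₂_div_Dplus : StrictAntiOn (fun w ↦ D₂ w / Dplus w) (Ioo 0 (1 / 2)) := by
  have hderiv : ∀ w ∈ Ioo (0 : ℝ) (1 / 2), HasDerivAt (fun w ↦ D₂ w / Dplus w)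
      (((1 / 2 - w) * logit w + 2 * D₂ w) / (6 * (1 / 2 - w) ^ 3)) w := fun w hw ↦ by
    have hs : 1 / 2 - w ≠ 0 := by linarith [hw.2]
    refine ((hasDerivAt_D₂ hw.1 (by linarith [hw.2])).div
      ((((hasDerivAt_id' w).const_sub (1 / 2)).pow 2).const_mul 6)
      (mul_ne_zero (by norm_num) (pow_ne_zero 2 hs))).congr_deriv ?_
    simp only [Pi.pow_apply]
    generalize 1 / 2 - w = s at hs ⊢
    field_simp
    ring
  refine strictAntiOn_of_hasDerivAt_neg (convex_Ioo 0 (1 / 2)) hderiv fun w hw ↦ ?_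
  rw [interior_Ioo] at hw
  have : 0 < 1 / 2 - w := by linarith [hw.2]
  exact div_neg_of_neg_of_pos (by linarith [two_mul_D₂_lt hw]) (by positivity)

theorem stmt_11 : StrictAntiOn Rplus (Set.Ioc (0 : ℝ) (1 / 2)) := by
  intro a ha b hb hab
  have ha' : a ∈ Ioo (0 : ℝ) (1 / 2) := ⟨ha.1, hab.trans_le hb.2⟩
  have hRa : Rplus a = D₂ a / Dplus a := if_neg ha'.2.ne
  rcases hb.2.eq_or_lt with rfl | hb'
  · rw [hRa, Rplus, if_pos rfl]
    exact one_third_lt_D₂_div_Dplus ha'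
  · rw [hRa, Rplus, if_neg hb'.ne]
    exact strictAntiOn_D₂_div_Dplus ha' ⟨hb.1, hb'⟩ hab
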